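/- Let f, g, h : ℂ → ℝ be smooth, and suppose ψ : ℂⁿ → ℝ is smooth with i∂∂̄ψ ≥ 0 (ψ plurisubharmonic), s : ℂⁿ → ℂ holomorphic, and ε > 0. Then the function u = log(|s|² + ε e^ψ) is plurisubharmonic, i.e. i∂∂̄u ≥ 0 as a (1,1)-form. Specifically, ∂∂̄ log(|s|² + ε e^ψ) = (ε e^ψ)/(|s|² + ε e^ψ)² · ( (|s|² + ε e^ψ) ∂∂̄ψ + |ds − s ∂ψ|² ) ≥ 0 pointwise wherever the identity makes sense. -/

import Mathlib

/-- The Laplacian of a function `u : ℂ → ℝ`, as the sum of the second derivatives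
in the directions `1` and `Complex.I` (viewing `ℂ` as a real vector space). -/
noncomputable def lap (u : ℂ → ℝ) (z : ℂ) : ℝ :=
  (iteratedFDeriv ℝ 2 u z) ![1, 1] + (iteratedFDeriv ℝ 2 u z) ![Complex.I, Complex.I]

open scoped ContDiff

lemma line_hasDerivAt (z e : ℂ) (t : ℝ) : HasDerivAt (fun τ : ℝ => z + τ • e) e t := by
  simpa using ((hasDerivAt_id t).smul_const e).const_add z

lemma mem_line (U : Set ℂ) (hU : IsOpen U) {z : ℂ} (hz : z ∈ U) (e : ℂ) :
    ∀ᶠ t : ℝ in nhds 0, z + t • e ∈ U := by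
  have hc : Continuous fun t : ℝ => z + t • e := by continuity
  have : z + (0:ℝ) • e ∈ U := by simpa using hz
  exact hc.continuousAt.preimage_mem_nhds (hU.mem_nhds this)

lemma bridge_mid {f : ℂ → ℝ} {U : Set ℂ} (hU : IsOpen U) (hf : ContDiffOn ℝ ∞ f U)
    {z : ℂ} (hz : z ∈ U) (e : ℂ) :
    iteratedFDeriv ℝ 2 f z ![e, e] = fderiv ℝ (fun w => fderiv ℝ f w e) z e := by
  have hdfz : DifferentiableAt ℝ (fderiv ℝ f) z :=
    (((hf.fderiv_of_isOpen (m := ∞) hU (by exact_mod_cast le_top)).differentiableOn (by simp)).differentiableAt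
      (hU.mem_nhds hz))
  rw [iteratedFDeriv_two_apply, fderiv_clm_apply hdfz (differentiableAt_const e)]
  simp

lemma bridge {f : ℂ → ℝ} {U : Set ℂ} (hU : IsOpen U) (hf : ContDiffOn ℝ ∞ f U)
    {z : ℂ} (hz : z ∈ U) (e : ℂ) :
    iteratedFDeriv ℝ 2 f z ![e, e] = deriv (deriv (fun t : ℝ => f (z + t • e))) 0 := by
  have hdfz : DifferentiableAt ℝ (fderiv ℝ f) z :=
    (((hf.fderiv_of_isOpen (m := ∞) hU (by exact_mod_cast le_top)).differentiableOn (by simp)).differentiableAt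
      (hU.mem_nhds hz))
  have happ : DifferentiableAt ℝ (fun w => fderiv ℝ f w e) z :=
    hdfz.clm_apply (differentiableAt_const e)
  have hEq : (fun t => deriv (fun τ : ℝ => f (z + τ • e)) t)
      =ᶠ[nhds (0:ℝ)] fun t => fderiv ℝ f (z + t • e) e := by
    filter_upwards [mem_line U hU hz e] with t ht
    exact (((hf.differentiableOn (by simp)).differentiableAt
      (hU.mem_nhds ht)).hasFDerivAt.comp_hasDerivAt t (line_hasDerivAt z e t)).deriv
  have h2 : HasDerivAt (fun t : ℝ => fderiv ℝ f (z + t • e) e)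
      (fderiv ℝ (fun w => fderiv ℝ f w e) z e) 0 := by
    exact happ.hasFDerivAt.comp_hasDerivAt_of_eq 0 (line_hasDerivAt z e 0) (by simp)
  rw [bridge_mid hU hf hz e, hEq.deriv_eq, h2.deriv]

lemma keyderiv (U : Set ℂ) (hU : IsOpen U) (s : ℂ → ℂ) (hs : DifferentiableOn ℂ s U)
    (ψ : ℂ → ℝ) (hψ : ContDiffOn ℝ ∞ ψ U) (ε : ℝ) (hε : 0 < ε)
    {z : ℂ} (hz : z ∈ U) (e : ℂ) :
    deriv (deriv (fun t : ℝ =>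
        Real.log (‖s (z + t • e)‖ ^ 2 + ε * Real.exp (ψ (z + t • e))))) 0
    = ((2 * ((e * deriv s z).re ^ 2 + (e * deriv s z).im ^ 2)
          + 2 * ((s z).re * (e * (e * deriv (deriv s) z)).re
                 + (s z).im * (e * (e * deriv (deriv s) z)).im)
          + ε * Real.exp (ψ z) * (fderiv ℝ ψ z e ^ 2 + fderiv ℝ (fun w => fderiv ℝ ψ w e) z e))
        * ((s z).re ^ 2 + (s z).im ^ 2 + ε * Real.exp (ψ z))
       - (2 * ((s z).re * (e * deriv s z).re + (s z).im * (e * deriv s z).im)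
          + ε * Real.exp (ψ z) * fderiv ℝ ψ z e) ^ 2)
      / ((s z).re ^ 2 + (s z).im ^ 2 + ε * Real.exp (ψ z)) ^ 2 := by
  have hz0 : z + (0:ℝ) • e = z := by simp
  have hmem0 : z + (0:ℝ) • e ∈ U := by rw [hz0]; exact hz
  -- derivative facts for s
  have hsd : ∀ {w : ℂ}, w ∈ U → HasDerivAt s (deriv s w) w := fun {w} hw =>
    (hs.differentiableAt (hU.mem_nhds hw)).hasDerivAt
  have hsC : ContDiffOn ℂ ω s U := hs.contDiffOn hU
  have hs1 : DifferentiableOn ℂ (deriv s) U :=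
    ((hsC.deriv_of_isOpen (m := ∞) hU le_top).differentiableOn (by simp))
  have hS : ∀ t : ℝ, z + t • e ∈ U →
      HasDerivAt (fun τ : ℝ => s (z + τ • e)) (e * deriv s (z + t • e)) t := by
    intro t ht
    have := (hsd ht).scomp t (line_hasDerivAt z e t)
    simpa [Function.comp_def, smul_eq_mul] using this
  have hS1 : HasDerivAt (fun t : ℝ => deriv s (z + t • e)) (e * deriv (deriv s) z) 0 := by
    have h0 : HasDerivAt (deriv s) (deriv (deriv s) z) z :=
      (hs1.differentiableAt (hU.mem_nhds hz)).hasDerivAt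
    have := (h0.scomp_of_eq 0 (line_hasDerivAt z e 0) hz0.symm)
    simpa [Function.comp_def, smul_eq_mul] using this
  have hp : ∀ t : ℝ, z + t • e ∈ U →
      HasDerivAt (fun τ : ℝ => (s (z + τ • e)).re) ((e * deriv s (z + t • e)).re) t := by
    intro t ht
    simpa [Function.comp_def] using Complex.reCLM.hasFDerivAt.comp_hasDerivAt t (hS t ht)
  have hq : ∀ t : ℝ, z + t • e ∈ U →
      HasDerivAt (fun τ : ℝ => (s (z + τ • e)).im) ((e * deriv s (z + t • e)).im) t := by
    intro t ht
    simpa [Function.comp_def] using Complex.imCLM.hasFDerivAt.comp_hasDerivAt t (hS t ht)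
  have hpr : HasDerivAt (fun t : ℝ => (e * deriv s (z + t • e)).re)
      ((e * (e * deriv (deriv s) z)).re) 0 := by
    simpa [Function.comp_def] using Complex.reCLM.hasFDerivAt.comp_hasDerivAt 0 (hS1.const_mul e)
  have hqr : HasDerivAt (fun t : ℝ => (e * deriv s (z + t • e)).im)
      ((e * (e * deriv (deriv s) z)).im) 0 := by
    simpa [Function.comp_def] using Complex.imCLM.hasFDerivAt.comp_hasDerivAt 0 (hS1.const_mul e)
  -- derivative facts for ψ
  have hΨd : ∀ t : ℝ, z + t • e ∈ U →
      HasDerivAt (fun τ : ℝ => ψ (z + τ • e)) (fderiv ℝ ψ (z + t • e) e) t := fun t ht =>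
    ((hψ.differentiableOn (by simp)).differentiableAt
      (hU.mem_nhds ht)).hasFDerivAt.comp_hasDerivAt t (line_hasDerivAt z e t)
  have happ : DifferentiableAt ℝ (fun w => fderiv ℝ ψ w e) z :=
    (((hψ.fderiv_of_isOpen (m := ∞) hU (by exact_mod_cast le_top)).differentiableOn
      (by simp)).differentiableAt (hU.mem_nhds hz)).clm_apply
      (differentiableAt_const e)
  have hΨ1 : HasDerivAt (fun t : ℝ => fderiv ℝ ψ (z + t • e) e)
      (fderiv ℝ (fun w => fderiv ℝ ψ w e) z e) 0 :=
    happ.hasFDerivAt.comp_hasDerivAt_of_eq 0 (line_hasDerivAt z e 0) (by simp)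
  -- the inner function and its derivative
  set vc : ℝ → ℝ := fun t => (s (z + t • e)).re * (s (z + t • e)).re
      + (s (z + t • e)).im * (s (z + t • e)).im + ε * Real.exp (ψ (z + t • e)) with hvc_def
  set vd : ℝ → ℝ := fun t =>
      ((e * deriv s (z + t • e)).re * (s (z + t • e)).re
        + (s (z + t • e)).re * (e * deriv s (z + t • e)).re)
      + ((e * deriv s (z + t • e)).im * (s (z + t • e)).im
        + (s (z + t • e)).im * (e * deriv s (z + t • e)).im)
      + ε * (Real.exp (ψ (z + t • e)) * fderiv ℝ ψ (z + t • e) e) with hvd_def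
  have hvcpos : ∀ t : ℝ, 0 < vc t := by
    intro t
    have h1 := mul_self_nonneg (s (z + t • e)).re
    have h2 := mul_self_nonneg (s (z + t • e)).im
    have h3 := mul_pos hε (Real.exp_pos (ψ (z + t • e)))
    simp only [hvc_def]
    nlinarith
  have hvcd : ∀ t : ℝ, z + t • e ∈ U → HasDerivAt vc (vd t) t := fun t ht =>
    (((hp t ht).mul (hp t ht)).add ((hq t ht).mul (hq t ht))).add
      (((hΨd t ht).exp).const_mul ε)
  have hfun : (fun t : ℝ =>
      Real.log (‖s (z + t • e)‖ ^ 2 + ε * Real.exp (ψ (z + t • e))))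
      = fun τ => Real.log (vc τ) := by
    funext t
    rw [Complex.sq_norm, Complex.normSq_apply, hvc_def]
  have hEq : deriv (fun τ : ℝ => Real.log (vc τ)) =ᶠ[nhds (0:ℝ)] fun t => vd t / vc t := by
    filter_upwards [mem_line U hU hz e] with t ht
    exact (((hvcd t ht)).log (hvcpos t).ne').deriv
  have hvd0 : HasDerivAt vd (((e * (e * deriv (deriv s) z)).re * (s (z + (0:ℝ) • e)).re
        + (e * deriv s (z + (0:ℝ) • e)).re * (e * deriv s (z + (0:ℝ) • e)).re
      + ((e * deriv s (z + (0:ℝ) • e)).re * (e * deriv s (z + (0:ℝ) • e)).re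
        + (s (z + (0:ℝ) • e)).re * (e * (e * deriv (deriv s) z)).re))
      + ((e * (e * deriv (deriv s) z)).im * (s (z + (0:ℝ) • e)).im
        + (e * deriv s (z + (0:ℝ) • e)).im * (e * deriv s (z + (0:ℝ) • e)).im
      + ((e * deriv s (z + (0:ℝ) • e)).im * (e * deriv s (z + (0:ℝ) • e)).im
        + (s (z + (0:ℝ) • e)).im * (e * (e * deriv (deriv s) z)).im))
      + ε * (Real.exp (ψ (z + (0:ℝ) • e)) * fderiv ℝ ψ (z + (0:ℝ) • e) e
              * fderiv ℝ ψ (z + (0:ℝ) • e) e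
            + Real.exp (ψ (z + (0:ℝ) • e)) * fderiv ℝ (fun w => fderiv ℝ ψ w e) z e)) 0 := by
    exact (((hpr.mul (hp 0 hmem0)).add ((hp 0 hmem0).mul hpr)).add
        ((hqr.mul (hq 0 hmem0)).add ((hq 0 hmem0).mul hqr))).add
      ((((hΨd 0 hmem0).exp).mul hΨ1).const_mul ε)
  have hdiv := (hvd0.div (hvcd 0 hmem0) (hvcpos 0).ne').deriv
  rw [hfun, hEq.deriv_eq, show (fun t => vd t / vc t) = vd / vc from rfl, hdiv]
  simp only [hvc_def, hvd_def, zero_smul, add_zero]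
  have hA : (0:ℝ) < (s z).re * (s z).re + (s z).im * (s z).im + ε * Real.exp (ψ z) := by
    have := hvcpos 0
    simpa only [hvc_def, zero_smul, add_zero] using this
  have hA' : (0:ℝ) < (s z).re ^ 2 + (s z).im ^ 2 + ε * Real.exp (ψ z) := by
    nlinarith [sq_nonneg (s z).re, sq_nonneg (s z).im, mul_pos hε (Real.exp_pos (ψ z))]
  rw [div_eq_div_iff (pow_ne_zero 2 hA.ne') (pow_ne_zero 2 hA'.ne')]
  ring

/-- For `s` holomorphic and `ψ` smooth subharmonic on an open set `U ⊆ ℂ`, and `ε > 0`,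
the function `log (|s|² + ε e^ψ)` is subharmonic on `U`. -/
theorem subharmonic_log_abs_sq_add_eps_exp
    (U : Set ℂ) (hU : IsOpen U) (s : ℂ → ℂ) (hs : DifferentiableOn ℂ s U)
    (ψ : ℂ → ℝ) (hψ : ContDiffOn ℝ (⊤ : ℕ∞) ψ U)
    (hsub : ∀ z ∈ U, 0 ≤ lap ψ z) (ε : ℝ) (hε : 0 < ε) :
    ∀ z ∈ U,
      0 ≤ lap (fun w => Real.log (‖s w‖ ^ 2 + ε * Real.exp (ψ w))) z := by
  intro z hz
  have hψ' : ContDiffOn ℝ ∞ ψ U := hψ.of_le (by simp)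
  have hsR : ContDiffOn ℝ ∞ s U := ((hs.contDiffOn hU : ContDiffOn ℂ ω s U).of_le le_top).restrict_scalars ℝ
  have hvS : ContDiffOn ℝ ∞ (fun w => ‖s w‖ ^ 2 + ε * Real.exp (ψ w)) U := by
    have hre : ContDiffOn ℝ ∞ (fun w => (s w).re) U := Complex.reCLM.contDiff.comp_contDiffOn hsR
    have him : ContDiffOn ℝ ∞ (fun w => (s w).im) U := Complex.imCLM.contDiff.comp_contDiffOn hsR
    have hexp : ContDiffOn ℝ ∞ (fun w => Real.exp (ψ w)) U :=
      Real.contDiff_exp.comp_contDiffOn hψ'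
    have h1 : ContDiffOn ℝ ∞
        (fun w => (s w).re * (s w).re + (s w).im * (s w).im + ε * Real.exp (ψ w)) U :=
      ((hre.mul hre).add (him.mul him)).add (contDiffOn_const.mul hexp)
    have heq : (fun w => ‖s w‖ ^ 2 + ε * Real.exp (ψ w))
        = fun w => (s w).re * (s w).re + (s w).im * (s w).im + ε * Real.exp (ψ w) := by
      funext w; rw [Complex.sq_norm, Complex.normSq_apply]
    rw [heq]; exact h1
  have hvpos : ∀ w ∈ U, ‖s w‖ ^ 2 + ε * Real.exp (ψ w) ≠ 0 := fun w hw =>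
    (add_pos_of_nonneg_of_pos (by positivity) (mul_pos hε (Real.exp_pos _))).ne'
  have hu : ContDiffOn ℝ ∞ (fun w => Real.log (‖s w‖ ^ 2 + ε * Real.exp (ψ w))) U :=
    hvS.log hvpos
  have h1 := (bridge hU hu hz 1).trans (keyderiv U hU s hs ψ hψ' ε hε hz 1)
  have hI := (bridge hU hu hz Complex.I).trans (keyderiv U hU s hs ψ hψ' ε hε hz Complex.I)
  have hψsub : 0 ≤ fderiv ℝ (fun w => fderiv ℝ ψ w 1) z 1
      + fderiv ℝ (fun w => fderiv ℝ ψ w Complex.I) z Complex.I := by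
    have h := hsub z hz
    unfold lap at h
    rwa [bridge_mid hU hψ' hz 1, bridge_mid hU hψ' hz Complex.I] at h
  unfold lap
  rw [h1, hI, ← add_div]
  apply div_nonneg _ (by positivity)
  simp only [one_mul, Complex.mul_re, Complex.mul_im, Complex.I_re, Complex.I_im,
    zero_mul, one_mul, zero_sub, sub_zero, zero_add, add_zero, mul_one, mul_zero, neg_neg, neg_mul]
  nlinarith [mul_nonneg (mul_pos hε (Real.exp_pos (ψ z))).le
      (sq_nonneg ((s z).re * fderiv ℝ ψ z 1 + (s z).im * fderiv ℝ ψ z Complex.I - 2 * (deriv s z).re)),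
    mul_nonneg (mul_pos hε (Real.exp_pos (ψ z))).le
      (sq_nonneg ((s z).im * fderiv ℝ ψ z 1 - (s z).re * fderiv ℝ ψ z Complex.I - 2 * (deriv s z).im)),
    mul_nonneg (mul_nonneg (mul_pos hε (Real.exp_pos (ψ z))).le hψsub) (sq_nonneg (s z).re),
    mul_nonneg (mul_nonneg (mul_pos hε (Real.exp_pos (ψ z))).le hψsub) (sq_nonneg (s z).im),
    mul_nonneg (mul_nonneg (mul_pos hε (Real.exp_pos (ψ z))).le (mul_pos hε (Real.exp_pos (ψ z))).le) hψsub]
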